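/- arXiv:2410.18837 — 2 statements merged into one kernel-verified Lean document; each statement's English description precedes it below -/
import Mathlib

section
/- Let α > 1 be real, n ≥ 1 be real, and suppose τ > 0 satisfies Σ_{i=1}^∞ i^{-α}/(i^{-α} + τ) = n (the series converges for every τ > 0). Then ((n + 1) · α sin(π/α)/π)^{-α} ≤ τ ≤ (n · α sin(π/α)/π)^{-α}. -/
/-!
The summand `i^{-α}/(i^{-α} + τ)` is `f i` for `f x = (1 + τ x^α)⁻¹`, which is antitone on
`[0, ∞)` with `f 0 = 1`, so the integral test traps `∫₀^∞ f` between `n` and `n + 1`.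
Substituting `x = τ^{-1/α} y`, then `y^α = t` and `t = u / (1 - u)`, turns this integral into
`τ^{-1/α} / α` times the Beta integral `B(1/α, 1 - 1/α) = Γ(1/α) Γ(1 - 1/α) = π / sin(π/α)`.
Solving `n ≤ τ^{-1/α} π / (α sin(π/α)) ≤ n + 1` for `τ` gives the bounds.
-/

open Real MeasureTheory Set Filter

theorem integral_rpow_mul_one_sub_rpow_eq_pi_div_sin {a : ℝ} (ha₀ : 0 < a) (ha₁ : a < 1) :
    ∫ x in (0 : ℝ)..1, x ^ (a - 1) * (1 - x) ^ (-a) = π / sin (π * a) := by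
  have hB : Complex.betaIntegral a (1 - a) =
      ((∫ x in (0 : ℝ)..1, x ^ (a - 1) * (1 - x) ^ (-a) : ℝ) : ℂ) := by
    rw [Complex.betaIntegral, ← intervalIntegral.integral_ofReal]
    refine intervalIntegral.integral_congr fun x hx => ?_
    rw [uIcc_of_le zero_le_one] at hx
    push_cast
    rw [Complex.ofReal_cpow hx.1, Complex.ofReal_cpow (by linarith [hx.2])]
    push_cast
    ring_nf
  have hΓ := Complex.Gamma_mul_Gamma_eq_betaIntegral (s := a) (t := 1 - a)
    (by simpa using ha₀) (by simpa using ha₁)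
  rw [add_sub_cancel, Complex.Gamma_one, one_mul, Complex.Gamma_mul_Gamma_one_sub, hB] at hΓ
  exact_mod_cast hΓ.symm

theorem image_div_one_sub_Ioo : (fun x : ℝ => x / (1 - x)) '' Ioo 0 1 = Ioi 0 := by
  ext t
  simp only [mem_image, mem_Ioi, mem_Ioo]
  constructor
  · rintro ⟨x, ⟨hx₀, hx₁⟩, rfl⟩
    exact div_pos hx₀ (by linarith)
  · intro ht
    refine ⟨t / (1 + t), ⟨by positivity, (div_lt_one (by positivity)).2 (by linarith)⟩, ?_⟩
    field_simp
    ring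

theorem integral_Ioi_rpow_mul_inv_one_add_eq_pi_div_sin {a : ℝ} (ha₀ : 0 < a) (ha₁ : a < 1) :
    ∫ t in Ioi 0, t ^ (a - 1) * (1 + t)⁻¹ = π / sin (π * a) := by
  have hderiv : ∀ x ∈ Ioo (0 : ℝ) 1,
      HasDerivWithinAt (fun x => x / (1 - x)) ((1 - x) ^ 2)⁻¹ (Ioo 0 1) x := by
    intro x hx
    have hx₁ : 1 - x ≠ 0 := by linarith [hx.2]
    exact (((hasDerivAt_id' x).div ((hasDerivAt_id' x).const_sub 1) hx₁).congr_deriv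
      (by ring)).hasDerivWithinAt
  have hinj : InjOn (fun x : ℝ => x / (1 - x)) (Ioo 0 1) := by
    intro x hx y hy hxy
    have hx₁ : 1 - x ≠ 0 := by linarith [hx.2]
    have hy₁ : 1 - y ≠ 0 := by linarith [hy.2]
    field_simp at hxy
    linarith
  rw [← image_div_one_sub_Ioo, integral_image_eq_integral_abs_deriv_smul measurableSet_Ioo hderiv
    hinj, ← integral_rpow_mul_one_sub_rpow_eq_pi_div_sin ha₀ ha₁,
    intervalIntegral.integral_of_le zero_le_one, integral_Ioc_eq_integral_Ioo]
  refine setIntegral_congr_fun measurableSet_Ioo fun x ⟨hx₀, hx₁⟩ => ?_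
  have h₁ : 0 < 1 - x := by linarith
  rw [smul_eq_mul, abs_of_pos (by positivity), div_rpow hx₀.le h₁.le,
    show 1 + x / (1 - x) = (1 - x)⁻¹ by field_simp; ring, inv_inv, rpow_neg h₁.le,
    rpow_sub_one h₁.ne']
  field_simp

theorem integral_Ioi_inv_one_add_rpow {p : ℝ} (hp : 1 < p) :
    ∫ x in Ioi 0, (1 + x ^ p)⁻¹ = π / (p * sin (π / p)) := by
  have hp₀ : 0 < p := by linarith
  calc ∫ x in Ioi 0, (1 + x ^ p)⁻¹
      = ∫ x in Ioi 0, (p * x ^ (p - 1)) • (p⁻¹ * ((x ^ p) ^ (p⁻¹ - 1) * (1 + x ^ p)⁻¹)) := by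
        refine setIntegral_congr_fun measurableSet_Ioi fun x hx => ?_
        have hx₀ : 0 < x := hx
        rw [smul_eq_mul, ← rpow_mul hx₀.le, mul_sub, mul_inv_cancel₀ hp₀.ne', mul_one]
        calc (1 + x ^ p)⁻¹ = (p * p⁻¹) * x ^ ((p - 1) + (1 - p)) * (1 + x ^ p)⁻¹ := by
              rw [mul_inv_cancel₀ hp₀.ne']; simp
          _ = _ := by rw [rpow_add hx₀]; ring
    _ = p⁻¹ * ∫ t in Ioi 0, t ^ (p⁻¹ - 1) * (1 + t)⁻¹ :=
        (integral_comp_rpow_Ioi_of_pos hp₀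
          (g := fun t => p⁻¹ * (t ^ (p⁻¹ - 1) * (1 + t)⁻¹))).trans (integral_const_mul _ _)
    _ = π / (p * sin (π / p)) := by
        rw [integral_Ioi_rpow_mul_inv_one_add_eq_pi_div_sin (by positivity)
          (inv_lt_one_of_one_lt₀ hp), div_eq_mul_inv π p]
        field_simp

theorem integral_Ioi_inv_one_add_mul_rpow {p τ : ℝ} (hp : 1 < p) (hτ : 0 < τ) :
    ∫ x in Ioi 0, (1 + τ * x ^ p)⁻¹ = τ ^ (-p⁻¹) / (p * sin (π / p) / π) := by
  have hp₀ : 0 < p := by linarith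
  have hscale : 0 < τ ^ p⁻¹ := by positivity
  calc ∫ x in Ioi 0, (1 + τ * x ^ p)⁻¹ = ∫ x in Ioi 0, (1 + (τ ^ p⁻¹ * x) ^ p)⁻¹ := by
        refine setIntegral_congr_fun measurableSet_Ioi fun x hx => ?_
        rw [mul_rpow hscale.le (le_of_lt hx), ← rpow_mul hτ.le, inv_mul_cancel₀ hp₀.ne', rpow_one]
    _ = τ ^ (-p⁻¹) / (p * sin (π / p) / π) := by
        rw [integral_comp_mul_left_Ioi (fun y => (1 + y ^ p)⁻¹) 0 hscale, mul_zero,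
          integral_Ioi_inv_one_add_rpow hp, smul_eq_mul, rpow_neg hτ.le, div_div_eq_mul_div,
          mul_div_assoc]

theorem sin_pi_div_pos {p : ℝ} (hp : 1 < p) : 0 < sin (π / p) :=
  sin_pos_of_pos_of_lt_pi (by positivity) (div_lt_self pi_pos hp)

theorem integrableOn_Ioi_inv_one_add_mul_rpow {p τ : ℝ} (hp : 1 < p) (hτ : 0 < τ) :
    IntegrableOn (fun x : ℝ => (1 + τ * x ^ p)⁻¹) (Ioi 0) := by
  have := sin_pi_div_pos hp
  have : 0 < p := by linarith
  -- the Bochner integral of a non-integrable function is `0`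
  refine Integrable.of_integral_ne_zero ?_
  rw [integral_Ioi_inv_one_add_mul_rpow hp hτ]
  positivity

theorem antitoneOn_inv_one_add_mul_rpow {p τ : ℝ} (hp : 0 ≤ p) (hτ : 0 ≤ τ) :
    AntitoneOn (fun x : ℝ => (1 + τ * x ^ p)⁻¹) (Ici 0) := by
  intro x hx y _ hxy
  have : 0 ≤ x ^ p := rpow_nonneg hx p
  dsimp only
  gcongr

theorem AntitoneOn.integral_Ioi_le_add_tsum {f : ℝ → ℝ} (anti : AntitoneOn f (Ici 0))
    (integrable : IntegrableOn f (Ioi 0)) (nonneg : ∀ t ∈ Ioi 0, 0 ≤ f t) :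
    ∫ x in Ioi 0, f x ≤ f 0 + ∑' n : ℕ, f (n + 1 : ℕ) := by
  have summable := anti.summable_of_integrableOn_Ioi_zero integrable nonneg
  rw [← Nat.cast_zero (R := ℝ), ← summable.tsum_eq_zero_add]
  exact_mod_cast AntitoneOn.integral_le_tsum_comp_add (f := f) 0 (mod_cast anti) summable
    (mod_cast nonneg)

theorem rpow_neg_div_rpow_neg_add {x : ℝ} (hx : 0 < x) (p τ : ℝ) :
    x ^ (-p) / (x ^ (-p) + τ) = (1 + τ * x ^ p)⁻¹ := by
  have : 0 < x ^ p := rpow_pos_of_pos hx p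
  rw [rpow_neg hx.le]
  field_simp

/-- If `τ > 0` solves `∑_{i=1}^∞ i^{-α}/(i^{-α} + τ) = n` with `α > 1`
and `n ≥ 1`, then `((n+1) α sin(π/α)/π)^{-α} ≤ τ ≤ (n α sin(π/α)/π)^{-α}`. -/
theorem effective_ridge_power_law_bounds
    (α n τ : ℝ) (hα : 1 < α) (hn : 1 ≤ n) (hτ : 0 < τ)
    (hsum : ∑' i : ℕ+, (i : ℝ) ^ (-α) / ((i : ℝ) ^ (-α) + τ) = n) :
    ((n + 1) * (α * Real.sin (Real.pi / α)) / Real.pi) ^ (-α) ≤ τ ∧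
      τ ≤ (n * (α * Real.sin (Real.pi / α)) / Real.pi) ^ (-α) := by
  have hα₀ : 0 < α := by linarith
  set f : ℝ → ℝ := fun x => (1 + τ * x ^ α)⁻¹
  have anti : AntitoneOn f (Ici 0) := antitoneOn_inv_one_add_mul_rpow hα₀.le hτ.le
  have integrable := integrableOn_Ioi_inv_one_add_mul_rpow hα hτ
  have nonneg (x : ℝ) (hx : x ∈ Ioi 0) : 0 ≤ f x := by
    have := rpow_nonneg (le_of_lt hx) α
    positivity
  have hf₀ : f 0 = 1 := by simp [f, zero_rpow hα₀.ne']
  have hsum' : ∑' k : ℕ, f (k + 1 : ℕ) = n := by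
    rw [← hsum, tsum_pnat_eq_tsum_succ (f := fun k : ℕ => (k : ℝ) ^ (-α) / ((k : ℝ) ^ (-α) + τ))]
    exact tsum_congr fun k => (rpow_neg_div_rpow_neg_add (by positivity) α τ).symm
  have upper := anti.tsum_add_one_le_integral integrable nonneg
  have lower := anti.integral_Ioi_le_add_tsum integrable nonneg
  have hs := sin_pi_div_pos hα
  have hc : 0 < α * sin (π / α) / π := by positivity
  have hn₀ : 0 < n := by linarith
  rw [hsum', integral_Ioi_inv_one_add_mul_rpow hα hτ, ← inv_neg, le_div_iff₀ hc,
    ← mul_div_assoc] at upper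
  rw [hsum', hf₀, integral_Ioi_inv_one_add_mul_rpow hα hτ, ← inv_neg, div_le_iff₀ hc, add_comm,
    ← mul_div_assoc] at lower
  have hneg : -α < 0 := by linarith
  exact ⟨(rpow_inv_le_iff_of_neg hτ (by positivity) hneg).1 lower,
    (le_rpow_inv_iff_of_neg (by positivity) hτ hneg).1 upper⟩
end

section
/- Let α > 1 and b > 1 be reals with b ≠ 2α + 1, and let K > 0. For each integer n ≥ 1, let τ_n > 0 be the unique solution of Σ_{i=1}^∞ 1/(1 + τ_n i^{α}) = n, set ζ_i(n) = τ_n i^{α}/(1 + τ_n i^{α}) and Ω_n = (1/n) Σ_{i=1}^∞ (1 − ζ_i(n))², let the signal coefficients be i^{-b} (so λ_i β_i² = i^{-b} with λ_i = i^{-α}), let σ_n² ≥ 0 be noise levels, let S_n = { i ∈ ℕ, i ≥ 1 : ζ_i(n)² < 1 − Ω_n } be the optimal feature mask, and define the masked surrogate-to-target risk R^{mask}_n = (σ_n² Ω_n + Σ_{i∈S_n} i^{-b} ζ_i(n)²)/(1 − Ω_n) + Σ_{i∉S_n} i^{-b}. Then: (i) if b < 2α + 1 and σ_n² ≤ K n^{-(b−1)}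 for all n, there exist constants c, C > 0 and N such that c · n^{-(b−1)} ≤ R^{mask}_n ≤ C · n^{-(b−1)} for all n ≥ N; (ii) if b > 2α + 1 and σ_n² ≤ K n^{-2α} for all n, there exist constants c, C > 0 and N such that c · n^{-2α} ≤ R^{mask}_n ≤ C · n^{-2α} for all n ≥ N. -/
/-!
Write `r = τ ^ (-1/α)`, so that `τ i ^ α = (i / r) ^ α`: `ζ_i` is small for `i ≪ r` and close
to `1` for `i ≫ r`.  Splitting the series `∑ 1 / (1 + τ i ^ α) = n` at `i ≈ r` gives `r ≍ n`,
and the coordinates `r ≤ i ≤ 4r`, on which `ζ_i (1 - ζ_i)` is bounded below, keep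
`1 - Ω = (1/n) ∑ ζ_i (1 - ζ_i)` bounded away from `0`.

A coordinate outside the optimal mask has `1 - Ω ≤ ζ_i²`, so its weight `i^{-b}` is at most
`i^{-b} ζ_i² / (1 - Ω)`.  Hence the masked risk lies between `V = ∑ i^{-b} ζ_i²` and
`(σ² Ω + V) / (1 - Ω)`, its value when nothing is masked.  Splitting `V` at `i ≈ r`, with
`ζ_i ≤ τ i ^ α` below and `ζ_i ≤ 1` above, gives `V ≍ r^{1-b}` when `b < 2α + 1` and
`V ≍ r^{-2α} = τ²` when `b > 2α + 1`; with `r ≍ n` these are the two rates.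
-/

open Finset Filter Asymptotics

lemma sum_range_add_rpow_neg_le {s : ℝ} (hs : 1 < s) {M : ℕ} (hM : 0 < M) (a : ℕ) :
    ∑ k ∈ range a, ((k + M + 1 : ℕ) : ℝ) ^ (-s) ≤ (M : ℝ) ^ (1 - s) / (s - 1) := by
  have hM' : (0 : ℝ) < M := by exact_mod_cast hM
  have hanti : AntitoneOn (fun x : ℝ => x ^ (-s)) (Set.Icc (M : ℝ) (M + a)) :=
    fun x hx y _ hxy => Real.rpow_le_rpow_of_nonpos (hM'.trans_le hx.1) hxy (by linarith)
  have hzero : (0 : ℝ) ∉ Set.uIcc (M : ℝ) (M + a) := by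
    rw [Set.uIcc_of_le (by linarith [a.cast_nonneg (α := ℝ)])]
    exact fun h => hM'.not_ge h.1
  calc ∑ k ∈ range a, ((k + M + 1 : ℕ) : ℝ) ^ (-s)
      = ∑ k ∈ range a, (M + ((k + 1 : ℕ) : ℝ)) ^ (-s) := by
        refine sum_congr rfl fun k _ => ?_
        push_cast; ring_nf
    _ ≤ ∫ x in (M : ℝ)..M + a, x ^ (-s) := hanti.sum_le_integral
    _ = ((M : ℝ) ^ (1 - s) - (M + a) ^ (1 - s)) / (s - 1) := by
        rw [integral_rpow (Or.inr ⟨by linarith, hzero⟩), show -s + 1 = 1 - s by ring,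
          div_eq_div_iff (by linarith) (by linarith)]
        ring
    _ ≤ (M : ℝ) ^ (1 - s) / (s - 1) :=
        div_le_div_of_nonneg_right (sub_le_self _ (by positivity)) (by linarith)

lemma tsum_nat_add_le_of_le_rpow_neg {g : ℕ → ℝ} {s C : ℝ} (hs : 1 < s) {M : ℕ} (hM : 0 < M)
    (hC : 0 ≤ C) (hg0 : ∀ k, 0 ≤ g k) (hg : ∀ k, M < k → g k ≤ C * (k : ℝ) ^ (-s)) :
    ∑' k : ℕ, g (k + M + 1) ≤ C * ((M : ℝ) ^ (1 - s) / (s - 1)) := by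
  refine Real.tsum_le_of_sum_range_le (fun k => hg0 _) fun a => ?_
  calc ∑ k ∈ range a, g (k + M + 1)
      ≤ ∑ k ∈ range a, C * ((k + M + 1 : ℕ) : ℝ) ^ (-s) :=
        sum_le_sum fun k _ => hg _ (by omega)
    _ ≤ C * ((M : ℝ) ^ (1 - s) / (s - 1)) := by
        rw [← mul_sum]; exact mul_le_mul_of_nonneg_left (sum_range_add_rpow_neg_le hs hM a) hC

lemma sum_range_succ_rpow_le {s : ℝ} (hs : -1 < s) (M : ℕ) :
    ∑ k ∈ range M, ((k + 1 : ℕ) : ℝ) ^ s ≤ (1 + 1 / (s + 1)) * (M : ℝ) ^ (s + 1) := by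
  have hs1 : 0 < s + 1 := by linarith
  rcases M.eq_zero_or_pos with rfl | hM
  · simp [Real.zero_rpow hs1.ne']
  rcases le_or_gt 0 s with hs0 | hs0
  · have hMs : (0 : ℝ) ≤ (M : ℝ) ^ (s + 1) := by positivity
    calc ∑ k ∈ range M, ((k + 1 : ℕ) : ℝ) ^ s ≤ ∑ _k ∈ range M, (M : ℝ) ^ s :=
          sum_le_sum fun k hk => Real.rpow_le_rpow (by positivity)
            (by exact_mod_cast mem_range.mp hk) hs0
      _ = (M : ℝ) ^ (s + 1) := by
          rw [sum_const, card_range, nsmul_eq_mul, Real.rpow_add_one (by positivity)]; ring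
      _ ≤ (1 + 1 / (s + 1)) * (M : ℝ) ^ (s + 1) := by
          nlinarith [one_div_pos.mpr hs1]
  · -- `x ^ s` is not antitone on `[0, 1]` (`0 ^ s = 0`), so the first term is split off
    obtain ⟨m, rfl⟩ : ∃ m, M = m + 1 := ⟨M - 1, by omega⟩
    have hanti : AntitoneOn (fun x : ℝ => x ^ s) (Set.Icc 1 (1 + m)) :=
      fun x hx y _ hxy => Real.rpow_le_rpow_of_nonpos (by linarith [hx.1]) hxy hs0.le
    have hint : ∑ k ∈ range m, ((k + 1 + 1 : ℕ) : ℝ) ^ s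
        ≤ (((m + 1 : ℕ) : ℝ) ^ (s + 1) - 1) / (s + 1) := by
      have h := hanti.sum_le_integral
      rw [integral_rpow (Or.inl hs), Real.one_rpow] at h
      convert h using 3 with k
      · push_cast; ring
      · push_cast; rw [add_comm]
    have hone : (1 : ℝ) ≤ ((m + 1 : ℕ) : ℝ) ^ (s + 1) := Real.one_le_rpow (by simp) hs1.le
    have hint_eq : (((m + 1 : ℕ) : ℝ) ^ (s + 1) - 1) / (s + 1)
        = 1 / (s + 1) * ((m + 1 : ℕ) : ℝ) ^ (s + 1) - 1 / (s + 1) := by ring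
    rw [sum_range_succ', zero_add, Nat.cast_one, Real.one_rpow]
    nlinarith [one_div_pos.mpr hs1]

lemma summable_pnat_rpow_neg {s : ℝ} (hs : 1 < s) : Summable fun i : ℕ+ => (i : ℝ) ^ (-s) :=
  summable_pnat_iff_summable_succ.mpr <| (summable_nat_add_iff 1).mpr <|
    Real.summable_nat_rpow.mpr (by linarith)

lemma summable_pnat_of_le_rpow_neg {g : ℕ → ℝ} {s C : ℝ} (hs : 1 < s) (hg0 : ∀ k, 0 ≤ g k)
    (hg : ∀ k, 0 < k → g k ≤ C * (k : ℝ) ^ (-s)) : Summable fun i : ℕ+ => g i := by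
  have hsum : Summable fun k : ℕ => C * ((k + 1 : ℕ) : ℝ) ^ (-s) :=
    ((summable_nat_add_iff 1).mpr (Real.summable_nat_rpow.mpr (by linarith))).mul_left C
  exact summable_pnat_iff_summable_succ.mpr <|
    hsum.of_nonneg_of_le (fun k => hg0 _) fun k => hg _ k.succ_pos

lemma sum_le_tsum_pnat {g : ℕ → ℝ} (hg : Summable fun i : ℕ+ => g i) (hg0 : ∀ k, 0 ≤ g k)
    (s : Finset ℕ) : ∑ k ∈ s, g (k + 1) ≤ ∑' i : ℕ+, g i := by
  rw [tsum_pnat_eq_tsum_succ]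
  exact (summable_pnat_iff_summable_succ.mp hg).sum_le_tsum s fun k _ => hg0 _

lemma tsum_pnat_eq_sum_range_add_tsum {g : ℕ → ℝ} (hg : Summable fun i : ℕ+ => g i) (M : ℕ) :
    ∑' i : ℕ+, g i = ∑ k ∈ range M, g (k + 1) + ∑' k : ℕ, g (k + M + 1) := by
  rw [tsum_pnat_eq_tsum_succ, ← (summable_pnat_iff_summable_succ.mp hg).sum_add_tsum_nat_add M]

lemma mul_le_tsum_pnat_of_le {g : ℕ → ℝ} {r c : ℝ} (hr : 1 ≤ r) (hc : 0 ≤ c)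
    (hg : Summable fun i : ℕ+ => g i) (hg0 : ∀ k, 0 ≤ g k)
    (hgc : ∀ k : ℕ, r ≤ k → (k : ℝ) ≤ 4 * r → c ≤ g k) : r * c ≤ ∑' i : ℕ+, g i := by
  set m := ⌈r⌉₊
  have hrm : r ≤ m := Nat.le_ceil r
  have hmr : (m : ℝ) < r + 1 := Nat.ceil_lt_add_one (by linarith)
  have hblock : ∀ k ∈ Ico m (2 * m), c ≤ g (k + 1) := by
    intro k hk
    obtain ⟨hmk, hk2m⟩ := mem_Ico.mp hk
    have hmk' : (m : ℝ) ≤ k := by exact_mod_cast hmk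
    have hk2m' : ((k + 1 : ℕ) : ℝ) ≤ 2 * m := by exact_mod_cast hk2m
    exact hgc _ (by push_cast; linarith) (by linarith)
  have := (card_nsmul_le_sum _ _ _ hblock).trans (sum_le_tsum_pnat hg hg0 _)
  rw [Nat.card_Ico, nsmul_eq_mul, show 2 * m - m = m by omega] at this
  exact (mul_le_mul_of_nonneg_right hrm hc).trans this

lemma Summable.ite_of_nonneg {ι : Type*} {f g : ι → ℝ} (hf : Summable f) (hg : Summable g)
    (hf0 : ∀ i, 0 ≤ f i) (hg0 : ∀ i, 0 ≤ g i) (p : ι → Prop) [DecidablePred p] :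
    Summable fun i => if p i then f i else g i :=
  (hf.add hg).of_nonneg_of_le (fun i => by split_ifs; exacts [hf0 i, hg0 i])
    fun i => by split_ifs; exacts [le_add_of_nonneg_right (hg0 i), le_add_of_nonneg_left (hf0 i)]

lemma summable_rpow_neg_mul_sq {b : ℝ} {z : ℕ+ → ℝ} (hb : 1 < b) (hz : ∀ i, z i ^ 2 ≤ 1) :
    Summable fun i : ℕ+ => (i : ℝ) ^ (-b) * z i ^ 2 :=
  (summable_pnat_rpow_neg hb).of_nonneg_of_le (fun i => by positivity)
    fun i => mul_le_of_le_one_right (by positivity) (hz i)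

section asymptotics

variable {ι : Type*} {l : Filter ι} {f g : ι → ℝ}

lemma isTheta_of_mul_le_of_le_mul {c C : ℝ} (hc : 0 < c)
    (h : ∀ᶠ x in l, 0 ≤ g x ∧ c * g x ≤ f x ∧ f x ≤ C * g x) : f =Θ[l] g := by
  refine ⟨.of_bound C ?_, .of_bound c⁻¹ ?_⟩ <;>
    filter_upwards [h] with x ⟨hg, hlo, hhi⟩ <;>
    rw [Real.norm_of_nonneg hg, Real.norm_of_nonneg ((mul_nonneg hc.le hg).trans hlo)]
  · exact hhi
  · rwa [inv_mul_eq_div, le_div_iff₀ hc, mul_comm]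

lemma Asymptotics.IsTheta.exists_bounds (h : f =Θ[l] g) (hf : ∀ᶠ x in l, 0 ≤ f x)
    (hg : ∀ᶠ x in l, 0 ≤ g x) :
    ∃ c C : ℝ, 0 < c ∧ 0 < C ∧ ∀ᶠ x in l, c * g x ≤ f x ∧ f x ≤ C * g x := by
  obtain ⟨C, hC, hCf⟩ := h.1.exists_pos
  obtain ⟨c, hc, hcg⟩ := h.2.exists_pos
  refine ⟨c⁻¹, C, inv_pos.mpr hc, hC, ?_⟩
  filter_upwards [hCf.bound, hcg.bound, hf, hg] with x hfx hgx hf0 hg0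
  rw [Real.norm_of_nonneg hf0, Real.norm_of_nonneg hg0] at hfx hgx
  exact ⟨by rwa [inv_mul_le_iff₀ hc], hfx⟩

lemma exists_bounds_of_le_of_le_mul {R V σ g : ℕ → ℝ} {D K : ℝ} (hV : V =Θ[atTop] g)
    (hV0 : ∀ n, 0 ≤ V n) (hg0 : ∀ n, 0 ≤ g n) (hD : 0 < D) (hK : 0 < K)
    (hR : ∀ᶠ n in atTop, V n ≤ R n ∧ R n ≤ D * (σ n + V n))
    (hσ : ∀ n : ℕ, 1 ≤ n → σ n ≤ K * g n) :
    ∃ c C : ℝ, 0 < c ∧ 0 < C ∧ ∃ N : ℕ, ∀ n : ℕ, N ≤ n → c * g n ≤ R n ∧ R n ≤ C * g n := by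
  obtain ⟨c, C, hc, hC, hVg⟩ := hV.exists_bounds (.of_forall hV0) (.of_forall hg0)
  refine ⟨c, D * (K + C), hc, by positivity, eventually_atTop.mp ?_⟩
  filter_upwards [hVg, hR, eventually_ge_atTop 1] with n ⟨hlo, hhi⟩ ⟨hRlo, hRhi⟩ hn
  refine ⟨hlo.trans hRlo, hRhi.trans ?_⟩
  rw [mul_assoc, add_mul]
  exact mul_le_mul_of_nonneg_left (add_le_add (hσ n hn) hhi) hD.le

end asymptotics

/-- `ζ_i(n) = shrinkage α τ_n i`. -/
noncomputable def shrinkage (α t x : ℝ) : ℝ := t * x ^ α / (1 + t * x ^ α)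

/-- `τ_n` is defined by `dof α τ_n = n`. -/
noncomputable def dof (α t : ℝ) : ℝ := ∑' i : ℕ+, 1 / (1 + t * (i : ℝ) ^ α)

/-- `∑ λ_i β_i² ζ_i²` for `λ_i β_i² = i^{-b}`. -/
noncomputable def bias (α b t : ℝ) : ℝ := ∑' i : ℕ+, (i : ℝ) ^ (-b) * shrinkage α t i ^ 2

/-- `R^{mask}_n = maskedRisk b σ_n² Ω_n ζ_n`. -/
noncomputable def maskedRisk (b σsq W : ℝ) (z : ℕ+ → ℝ) : ℝ :=
  (σsq * W + ∑' i : ℕ+, (if z i ^ 2 < 1 - W then (i : ℝ) ^ (-b) * z i ^ 2 else 0)) / (1 - W)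
    + ∑' i : ℕ+, (if z i ^ 2 < 1 - W then 0 else (i : ℝ) ^ (-b))

section shrinkage

variable {α t x : ℝ}

lemma shrinkage_nonneg (ht : 0 ≤ t) (hx : 0 ≤ x) : 0 ≤ shrinkage α t x := by
  unfold shrinkage; positivity

lemma one_sub_shrinkage (ht : 0 ≤ t) (hx : 0 ≤ x) :
    1 - shrinkage α t x = 1 / (1 + t * x ^ α) := by
  have : 0 < 1 + t * x ^ α := by positivity
  unfold shrinkage; field_simp; ring

lemma shrinkage_le_one (ht : 0 ≤ t) (hx : 0 ≤ x) : shrinkage α t x ≤ 1 := by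
  have := one_sub_shrinkage (α := α) ht hx
  have : 0 ≤ 1 / (1 + t * x ^ α) := by positivity
  linarith

lemma shrinkage_sq_le_one (ht : 0 ≤ t) (hx : 0 ≤ x) : shrinkage α t x ^ 2 ≤ 1 :=
  pow_le_one₀ (shrinkage_nonneg ht hx) (shrinkage_le_one ht hx)

lemma shrinkage_le_mul_rpow (ht : 0 ≤ t) (hx : 0 ≤ x) : shrinkage α t x ≤ t * x ^ α :=
  div_le_self (by positivity) (by linarith [show 0 ≤ t * x ^ α by positivity])

lemma half_le_shrinkage (h : 1 ≤ t * x ^ α) : 1 / 2 ≤ shrinkage α t x := by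
  unfold shrinkage; rw [div_le_div_iff₀ two_pos (by linarith)]; linarith

lemma inv_sq_le_shrinkage_mul_one_sub {c : ℝ} (ht : 0 ≤ t) (hx : 0 ≤ x) (hone : 1 ≤ t * x ^ α)
    (hc : t * x ^ α ≤ c) : 1 / (1 + c) ^ 2 ≤ shrinkage α t x * (1 - shrinkage α t x) := by
  rw [one_sub_shrinkage ht hx, shrinkage]
  set y := t * x ^ α
  have hy : 0 < 1 + y := by linarith
  rw [div_mul_div_comm, mul_one, div_le_div_iff₀ (by nlinarith) (by positivity)]
  nlinarith [mul_nonneg (sub_nonneg.mpr hone) (sq_nonneg (1 + c)),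
    mul_nonneg (sub_nonneg.mpr hc) (by linarith : 0 ≤ 2 + c + y)]

end shrinkage

section scale

variable {α t r x : ℝ}

lemma mul_rpow_neg_inv_rpow (hα : α ≠ 0) (ht : 0 < t) : t * (t ^ (-α⁻¹)) ^ α = 1 := by
  rw [← Real.rpow_mul ht.le, neg_mul, inv_mul_cancel₀ hα, Real.rpow_neg_one, mul_inv_cancel₀ ht.ne']

lemma sq_eq_rpow_neg (hr : 0 < r) (htr : t * r ^ α = 1) : t ^ 2 = r ^ (-(2 * α)) := by
  rw [eq_inv_of_mul_eq_one_left htr, inv_pow, ← Real.rpow_natCast, ← Real.rpow_mul hr.le,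
    Real.rpow_neg hr.le]
  norm_num [mul_comm]

lemma mul_rpow_le_rpow {c : ℝ} (hα : 0 ≤ α) (ht : 0 ≤ t) (hr : 0 ≤ r) (htr : t * r ^ α = 1)
    (hx : 0 ≤ x) (hc : 0 ≤ c) (h : x ≤ c * r) : t * x ^ α ≤ c ^ α := by
  calc t * x ^ α ≤ t * (c * r) ^ α := by gcongr
    _ = c ^ α := by rw [Real.mul_rpow hc hr, mul_left_comm, htr, mul_one]

lemma one_le_mul_rpow (hα : 0 ≤ α) (ht : 0 ≤ t) (hr : 0 ≤ r) (htr : t * r ^ α = 1)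
    (h : r ≤ x) : 1 ≤ t * x ^ α := by
  rw [← htr]; gcongr

lemma summable_one_div_one_add_mul_rpow (hα : 1 < α) (ht : 0 < t) :
    Summable fun i : ℕ+ => 1 / (1 + t * (i : ℝ) ^ α) :=
  summable_pnat_of_le_rpow_neg (g := fun k : ℕ => 1 / (1 + t * (k : ℝ) ^ α)) (C := t⁻¹) hα
    (fun k => by positivity) fun k hk => by
    have : (0 : ℝ) < k := by exact_mod_cast hk
    rw [Real.rpow_neg this.le, ← mul_inv, one_div]
    exact inv_anti₀ (by positivity) (by linarith [show 0 < t * (k : ℝ) ^ α by positivity])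

lemma le_two_mul_dof_add_one (hα : 1 < α) (ht : 0 < t) (hr : 0 ≤ r) (htr : t * r ^ α = 1) :
    r ≤ 2 * dof α t + 1 := by
  have hhead : ∑ k ∈ range ⌊r⌋₊, 1 / (1 + t * ((k + 1 : ℕ) : ℝ) ^ α) ≤ dof α t :=
    sum_le_tsum_pnat (g := fun k : ℕ => 1 / (1 + t * (k : ℝ) ^ α))
      (summable_one_div_one_add_mul_rpow hα ht) (fun k => by positivity) _
  have hhalf : ∀ k ∈ range ⌊r⌋₊, 1 / 2 ≤ 1 / (1 + t * ((k + 1 : ℕ) : ℝ) ^ α) := by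
    intro k hk
    have hkr : ((k + 1 : ℕ) : ℝ) ≤ r := (Nat.le_floor_iff hr).mp (mem_range.mp hk)
    have := mul_rpow_le_rpow (x := ((k + 1 : ℕ) : ℝ)) (by linarith) ht.le hr htr
      (by positivity) zero_le_one (by rwa [one_mul])
    rw [Real.one_rpow] at this
    rw [div_le_div_iff₀ two_pos (by positivity)]; linarith
  have := (card_nsmul_le_sum _ _ _ hhalf).trans hhead
  rw [card_range, nsmul_eq_mul] at this
  linarith [Nat.lt_floor_add_one r]

lemma dof_le (hα : 1 < α) (ht : 0 < t) (hr : 0 < r) (htr : t * r ^ α = 1) :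
    dof α t ≤ α / (α - 1) * r + 1 := by
  set M := ⌈r⌉₊
  have hM : 0 < M := Nat.ceil_pos.mpr hr
  have hrM : r ≤ M := Nat.le_ceil r
  have hhead : ∑ k ∈ range M, 1 / (1 + t * ((k + 1 : ℕ) : ℝ) ^ α) ≤ r + 1 := by
    refine (sum_le_card_nsmul _ _ 1 fun k _ => ?_).trans ?_
    · rw [div_le_one (by positivity)]; linarith [show 0 ≤ t * ((k + 1 : ℕ) : ℝ) ^ α by positivity]
    · rw [card_range, nsmul_eq_mul, mul_one]; exact (Nat.ceil_lt_add_one hr.le).le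
  have htail : ∑' k : ℕ, 1 / (1 + t * ((k + M + 1 : ℕ) : ℝ) ^ α)
      ≤ r ^ α * ((M : ℝ) ^ (1 - α) / (α - 1)) := by
    refine tsum_nat_add_le_of_le_rpow_neg (g := fun k : ℕ => 1 / (1 + t * (k : ℝ) ^ α)) hα hM
      (by positivity) (fun k => by positivity) fun k hk => ?_
    have hk0 : (0 : ℝ) < k := by exact_mod_cast (hM.trans hk)
    have hrt : r ^ α = t⁻¹ := eq_inv_of_mul_eq_one_right htr
    rw [Real.rpow_neg hk0.le, hrt, ← mul_inv, one_div]
    exact inv_anti₀ (by positivity) (by linarith [show 0 < t * (k : ℝ) ^ α by positivity])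
  have hscale : r ^ α * (M : ℝ) ^ (1 - α) ≤ r := by
    calc r ^ α * (M : ℝ) ^ (1 - α) ≤ r ^ α * r ^ (1 - α) :=
          mul_le_mul_of_nonneg_left (Real.rpow_le_rpow_of_nonpos hr hrM (by linarith))
            (by positivity)
      _ = r := by rw [← Real.rpow_add hr]; simp
  have hα1 : 0 < α - 1 := by linarith
  have hsplit := tsum_pnat_eq_sum_range_add_tsum
    (g := fun k : ℕ => 1 / (1 + t * (k : ℝ) ^ α)) (summable_one_div_one_add_mul_rpow hα ht) M
  have htail' : r ^ α * ((M : ℝ) ^ (1 - α) / (α - 1)) ≤ r / (α - 1) := by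
    rw [← mul_div_assoc]; exact div_le_div_of_nonneg_right hscale hα1.le
  have hfinal : r + 1 + r / (α - 1) = α / (α - 1) * r + 1 := by field_simp; ring
  rw [dof, hsplit]
  linarith

lemma scale_bounds_of_dof_eq (hα : 1 < α) (ht : 0 < t) (hr : 0 < r) (htr : t * r ^ α = 1)
    {n : ℝ} (hn : 2 ≤ n) (hdof : dof α t = n) :
    (α - 1) / (2 * α) * n ≤ r ∧ r ≤ 3 * n := by
  have hup := le_two_mul_dof_add_one hα ht hr.le htr
  have hlo := dof_le hα ht hr htr
  rw [hdof] at hup hlo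
  refine ⟨?_, by linarith⟩
  have hα1 : 0 < α - 1 := by linarith
  rw [div_mul_eq_mul_div, div_le_iff₀ (by linarith)]
  rw [div_mul_eq_mul_div, ← sub_le_iff_le_add, le_div_iff₀ hα1] at hlo
  nlinarith

lemma one_sub_inv_mul_tsum_one_sub_shrinkage_sq (hα : 1 < α) (ht : 0 < t) {n : ℝ} (hn : n ≠ 0)
    (hdof : dof α t = n) :
    1 - 1 / n * ∑' i : ℕ+, (1 - shrinkage α t i) ^ 2
      = 1 / n * ∑' i : ℕ+, shrinkage α t i * (1 - shrinkage α t i) := by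
  have hu : ∀ i : ℕ+, 1 - shrinkage α t i = 1 / (1 + t * (i : ℝ) ^ α) :=
    fun i => one_sub_shrinkage ht.le (by positivity)
  have hsum : Summable fun i : ℕ+ => 1 - shrinkage α t i := by
    simpa only [hu] using summable_one_div_one_add_mul_rpow hα ht
  have hsq : Summable fun i : ℕ+ => (1 - shrinkage α t i) ^ 2 :=
    hsum.of_nonneg_of_le (fun i => sq_nonneg _) fun i => by
      have hζ0 : 0 ≤ shrinkage α t i := shrinkage_nonneg ht.le (by positivity)
      have hζ1 : shrinkage α t i ≤ 1 := shrinkage_le_one ht.le (by positivity)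
      nlinarith
  have hn' : ∑' i : ℕ+, (1 - shrinkage α t i) = n := by rw [tsum_congr hu]; exact hdof
  have hdiff : ∑' i : ℕ+, shrinkage α t i * (1 - shrinkage α t i)
      = n - ∑' i : ℕ+, (1 - shrinkage α t i) ^ 2 := by
    rw [← hn', ← hsum.tsum_sub hsq]
    exact tsum_congr fun i => by ring
  rw [hdiff]
  field_simp

lemma div_le_tsum_shrinkage_mul_one_sub (hα : 1 < α) (ht : 0 < t) (hr : 1 ≤ r)
    (htr : t * r ^ α = 1) :
    r / (1 + 4 ^ α) ^ 2 ≤ ∑' i : ℕ+, shrinkage α t i * (1 - shrinkage α t i) := by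
  have hζ0 : ∀ x : ℝ, 0 ≤ x → 0 ≤ shrinkage α t x * (1 - shrinkage α t x) := fun x hx =>
    mul_nonneg (shrinkage_nonneg ht.le hx) (sub_nonneg.mpr (shrinkage_le_one ht.le hx))
  have hsum : Summable fun i : ℕ+ => shrinkage α t i * (1 - shrinkage α t i) :=
    (summable_one_div_one_add_mul_rpow hα ht).of_nonneg_of_le (fun i => hζ0 _ (by positivity))
      fun i => by
      rw [← one_sub_shrinkage ht.le (by positivity)]
      exact mul_le_of_le_one_left (sub_nonneg.mpr (shrinkage_le_one ht.le (by positivity)))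
        (shrinkage_le_one ht.le (by positivity))
  rw [div_eq_mul_one_div]
  refine mul_le_tsum_pnat_of_le (g := fun k : ℕ => shrinkage α t k * (1 - shrinkage α t k)) hr
    (by positivity) hsum (fun k => hζ0 _ k.cast_nonneg) fun k hrk hk4r => ?_
  exact inv_sq_le_shrinkage_mul_one_sub ht.le k.cast_nonneg
    (one_le_mul_rpow (by linarith) ht.le (by linarith) htr hrk)
    (mul_rpow_le_rpow (by linarith) ht.le (by linarith) htr k.cast_nonneg (by norm_num) hk4r)

end scale

section bias

variable {α b t r : ℝ}

lemma summable_rpow_neg_mul_shrinkage_sq (hb : 1 < b) (ht : 0 ≤ t) :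
    Summable fun i : ℕ+ => (i : ℝ) ^ (-b) * shrinkage α t i ^ 2 :=
  summable_rpow_neg_mul_sq hb fun _ => shrinkage_sq_le_one ht (by positivity)

lemma bias_nonneg : 0 ≤ bias α b t :=
  tsum_nonneg fun i => by positivity

lemma rpow_le_bias (hα : 0 ≤ α) (hb : 1 < b) (ht : 0 < t) (hr : 1 ≤ r) (htr : t * r ^ α = 1) :
    4 ^ (-b) / 4 * r ^ (1 - b) ≤ bias α b t := by
  have hr0 : 0 < r := by linarith
  have hc : r * ((4 * r) ^ (-b) / 4) = 4 ^ (-b) / 4 * r ^ (1 - b) := by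
    rw [Real.mul_rpow (by norm_num) hr0.le, Real.rpow_sub hr0, Real.rpow_one, Real.rpow_neg hr0.le]
    field_simp
  rw [← hc]
  refine mul_le_tsum_pnat_of_le (g := fun k : ℕ => (k : ℝ) ^ (-b) * shrinkage α t k ^ 2) hr
    (by positivity) (summable_rpow_neg_mul_shrinkage_sq hb ht.le) (fun k => by positivity)
    fun k hrk hk4r => ?_
  have hhalf := half_le_shrinkage (one_le_mul_rpow hα ht.le hr0.le htr hrk)
  calc (4 * r) ^ (-b) / 4 = (4 * r) ^ (-b) * (1 / 2) ^ 2 := by ring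
    _ ≤ (k : ℝ) ^ (-b) * shrinkage α t k ^ 2 :=
        mul_le_mul (Real.rpow_le_rpow_of_nonpos (by linarith) hk4r (by linarith))
          (pow_le_pow_left₀ (by norm_num) hhalf 2) (by positivity) (by positivity)

lemma sq_div_four_le_bias (hb : 1 < b) (ht : 0 < t) (ht1 : t ≤ 1) : t ^ 2 / 4 ≤ bias α b t := by
  have hζ1 : shrinkage α t ((1 : ℕ+) : ℝ) = t / (1 + t) := by simp [shrinkage]
  have hhalf : t / 2 ≤ t / (1 + t) := div_le_div_of_nonneg_left ht.le (by linarith) (by linarith)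
  calc t ^ 2 / 4 = (t / 2) ^ 2 := by ring
    _ ≤ ((1 : ℕ+) : ℝ) ^ (-b) * shrinkage α t ((1 : ℕ+) : ℝ) ^ 2 := by
        rw [hζ1]; simp only [PNat.one_coe, Nat.cast_one, Real.one_rpow, one_mul]; gcongr
    _ ≤ bias α b t :=
        (summable_rpow_neg_mul_shrinkage_sq hb ht.le).le_tsum 1 fun _ _ => by positivity

lemma bias_le_head_add_tail (hb : 1 < b) (ht : 0 < t) {M : ℕ} (hM : 0 < M) :
    bias α b t ≤ t ^ 2 * ∑ k ∈ range M, ((k + 1 : ℕ) : ℝ) ^ (2 * α - b)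
      + (M : ℝ) ^ (1 - b) / (b - 1) := by
  have hsplit := tsum_pnat_eq_sum_range_add_tsum
    (g := fun k : ℕ => (k : ℝ) ^ (-b) * shrinkage α t k ^ 2)
    (summable_rpow_neg_mul_shrinkage_sq hb ht.le) M
  have hhead : ∀ k ∈ range M, ((k + 1 : ℕ) : ℝ) ^ (-b) * shrinkage α t ((k + 1 : ℕ) : ℝ) ^ 2
      ≤ t ^ 2 * ((k + 1 : ℕ) : ℝ) ^ (2 * α - b) := by
    intro k _
    set x : ℝ := ((k + 1 : ℕ) : ℝ)
    have hx : 0 < x := by positivity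
    calc x ^ (-b) * shrinkage α t x ^ 2 ≤ x ^ (-b) * (t * x ^ α) ^ 2 := by
          gcongr
          · exact shrinkage_nonneg ht.le hx.le
          · exact shrinkage_le_mul_rpow ht.le hx.le
      _ = t ^ 2 * x ^ (2 * α - b) := by
          rw [mul_pow, ← Real.rpow_natCast (x ^ α), ← Real.rpow_mul hx.le, sub_eq_neg_add,
            Real.rpow_add hx, Nat.cast_ofNat, mul_comm α]
          ring
  have htail := tsum_nat_add_le_of_le_rpow_neg
    (g := fun k : ℕ => (k : ℝ) ^ (-b) * shrinkage α t k ^ 2) hb hM zero_le_one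
    (fun k => by positivity) fun k _ => by
      rw [one_mul]
      exact mul_le_of_le_one_right (by positivity) (shrinkage_sq_le_one ht.le k.cast_nonneg)
  rw [one_mul] at htail
  rw [bias, hsplit, mul_sum]
  exact add_le_add (sum_le_sum hhead) htail

lemma bias_le_of_lt (hb : 1 < b) (hlt : b < 2 * α + 1) (ht : 0 < t) (hr : 1 ≤ r)
    (htr : t * r ^ α = 1) :
    bias α b t ≤ ((1 + 1 / (2 * α - b + 1)) * 2 ^ (2 * α - b + 1) + 1 / (b - 1)) * r ^ (1 - b) := by
  have hr0 : 0 < r := by linarith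
  set M := ⌈r⌉₊
  have hM : 0 < M := Nat.ceil_pos.mpr hr0
  have hrM : r ≤ M := Nat.le_ceil r
  have hM2r : (M : ℝ) ≤ 2 * r := by linarith [Nat.ceil_lt_add_one hr0.le]
  have hhead : t ^ 2 * ∑ k ∈ range M, ((k + 1 : ℕ) : ℝ) ^ (2 * α - b)
      ≤ (1 + 1 / (2 * α - b + 1)) * 2 ^ (2 * α - b + 1) * r ^ (1 - b) := by
    have hexp : t ^ 2 * r ^ (2 * α - b + 1) = r ^ (1 - b) := by
      rw [sq_eq_rpow_neg hr0 htr, ← Real.rpow_add hr0]; ring_nf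
    calc t ^ 2 * ∑ k ∈ range M, ((k + 1 : ℕ) : ℝ) ^ (2 * α - b)
        ≤ t ^ 2 * ((1 + 1 / (2 * α - b + 1)) * (2 * r) ^ (2 * α - b + 1)) := by
          gcongr
          refine (sum_range_succ_rpow_le (by linarith) M).trans ?_
          have : 0 < 2 * α - b + 1 := by linarith
          gcongr
      _ = (1 + 1 / (2 * α - b + 1)) * 2 ^ (2 * α - b + 1) * r ^ (1 - b) := by
          rw [Real.mul_rpow (by norm_num) hr0.le, ← hexp]; ring
  have htail : (M : ℝ) ^ (1 - b) / (b - 1) ≤ 1 / (b - 1) * r ^ (1 - b) := by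
    rw [one_div_mul_eq_div]
    exact div_le_div_of_nonneg_right (Real.rpow_le_rpow_of_nonpos hr0 hrM (by linarith))
      (by linarith)
  linarith [bias_le_head_add_tail (α := α) hb ht hM]

lemma bias_le_of_gt (hb : 1 < b) (hgt : 2 * α + 1 < b) (ht : 0 < t) (hr : 1 ≤ r)
    (htr : t * r ^ α = 1) :
    bias α b t ≤ (∑' k : ℕ, ((k + 1 : ℕ) : ℝ) ^ (2 * α - b) + 1 / (b - 1)) * r ^ (-(2 * α)) := by
  have hr0 : 0 < r := by linarith
  set M := ⌈r⌉₊
  have hM : 0 < M := Nat.ceil_pos.mpr hr0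
  have hsum : Summable fun k : ℕ => ((k + 1 : ℕ) : ℝ) ^ (2 * α - b) :=
    (summable_nat_add_iff 1).mpr (Real.summable_nat_rpow.mpr (by linarith))
  have hhead : t ^ 2 * ∑ k ∈ range M, ((k + 1 : ℕ) : ℝ) ^ (2 * α - b)
      ≤ (∑' k : ℕ, ((k + 1 : ℕ) : ℝ) ^ (2 * α - b)) * r ^ (-(2 * α)) := by
    rw [sq_eq_rpow_neg hr0 htr, mul_comm]
    gcongr
    exact hsum.sum_le_tsum _ fun k _ => by positivity
  have htail : (M : ℝ) ^ (1 - b) / (b - 1) ≤ 1 / (b - 1) * r ^ (-(2 * α)) := by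
    rw [one_div_mul_eq_div]
    refine div_le_div_of_nonneg_right ?_ (by linarith)
    calc (M : ℝ) ^ (1 - b) ≤ r ^ (1 - b) :=
          Real.rpow_le_rpow_of_nonpos hr0 (Nat.le_ceil r) (by linarith)
      _ ≤ r ^ (-(2 * α)) := Real.rpow_le_rpow_of_exponent_le hr (by linarith)
  linarith [bias_le_head_add_tail (α := α) hb ht hM]

end bias

section maskedRisk

variable {b σsq W : ℝ} {z : ℕ+ → ℝ}

lemma tsum_rpow_neg_mul_sq_le_maskedRisk (hb : 1 < b) (hz : ∀ i, z i ^ 2 ≤ 1) (hσ : 0 ≤ σsq)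
    (hW : 0 ≤ W) (hW1 : W < 1) :
    ∑' i : ℕ+, (i : ℝ) ^ (-b) * z i ^ 2 ≤ maskedRisk b σsq W z := by
  have hw := summable_pnat_rpow_neg hb
  have hw0 : ∀ i : ℕ+, 0 ≤ (i : ℝ) ^ (-b) := fun i => by positivity
  have hwz := summable_rpow_neg_mul_sq hb hz
  have hwz0 : ∀ i : ℕ+, 0 ≤ (i : ℝ) ^ (-b) * z i ^ 2 := fun i => by positivity
  have hkept := hwz.ite_of_nonneg summable_zero hwz0 (fun _ => le_rfl) (z · ^ 2 < 1 - W)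
  have hmasked := summable_zero.ite_of_nonneg hw (fun _ => le_rfl) hw0 (z · ^ 2 < 1 - W)
  have hA : 0 ≤ ∑' i : ℕ+, (if z i ^ 2 < 1 - W then (i : ℝ) ^ (-b) * z i ^ 2 else 0) :=
    tsum_nonneg fun i => by split_ifs; exacts [hwz0 i, le_rfl]
  calc ∑' i : ℕ+, (i : ℝ) ^ (-b) * z i ^ 2
      ≤ ∑' i : ℕ+, ((if z i ^ 2 < 1 - W then (i : ℝ) ^ (-b) * z i ^ 2 else 0)
          + if z i ^ 2 < 1 - W then 0 else (i : ℝ) ^ (-b)) :=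
        hwz.tsum_le_tsum (fun i => by
          split_ifs
          · simp
          · simpa using mul_le_of_le_one_right (hw0 i) (hz i)) (hkept.add hmasked)
    _ ≤ (σsq * W + ∑' i : ℕ+, (if z i ^ 2 < 1 - W then (i : ℝ) ^ (-b) * z i ^ 2 else 0))
          / (1 - W) + ∑' i : ℕ+, (if z i ^ 2 < 1 - W then 0 else (i : ℝ) ^ (-b)) := by
        rw [hkept.tsum_add hmasked]
        gcongr
        rw [le_div_iff₀ (by linarith)]
        nlinarith [mul_nonneg hσ hW]

lemma maskedRisk_le (hb : 1 < b) (hz : ∀ i, z i ^ 2 ≤ 1) (hW1 : W < 1) :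
    maskedRisk b σsq W z ≤ (σsq * W + ∑' i : ℕ+, (i : ℝ) ^ (-b) * z i ^ 2) / (1 - W) := by
  have hW : 0 < 1 - W := by linarith
  have hw := summable_pnat_rpow_neg hb
  have hw0 : ∀ i : ℕ+, 0 ≤ (i : ℝ) ^ (-b) := fun i => by positivity
  have hwz := summable_rpow_neg_mul_sq hb hz
  have hwz0 : ∀ i : ℕ+, 0 ≤ (i : ℝ) ^ (-b) * z i ^ 2 := fun i => by positivity
  have hkept := hwz.ite_of_nonneg summable_zero hwz0 (fun _ => le_rfl) (z · ^ 2 < 1 - W)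
  have hdropped := summable_zero.ite_of_nonneg hwz (fun _ => le_rfl) hwz0 (z · ^ 2 < 1 - W)
  have hmasked := summable_zero.ite_of_nonneg hw (fun _ => le_rfl) hw0 (z · ^ 2 < 1 - W)
  have hsplit : ∑' i : ℕ+, (i : ℝ) ^ (-b) * z i ^ 2
      = ∑' i : ℕ+, (if z i ^ 2 < 1 - W then (i : ℝ) ^ (-b) * z i ^ 2 else 0)
        + ∑' i : ℕ+, (if z i ^ 2 < 1 - W then 0 else (i : ℝ) ^ (-b) * z i ^ 2) := by
    rw [← hkept.tsum_add hdropped]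
    exact tsum_congr fun i => by split_ifs <;> simp
  -- a masked-out coordinate has `1 - W ≤ z i ^ 2`
  have hmask : ∑' i : ℕ+, (if z i ^ 2 < 1 - W then 0 else (i : ℝ) ^ (-b))
      ≤ (∑' i : ℕ+, (if z i ^ 2 < 1 - W then 0 else (i : ℝ) ^ (-b) * z i ^ 2)) / (1 - W) := by
    rw [le_div_iff₀ hW, ← tsum_mul_right]
    refine (hmasked.mul_right _).tsum_le_tsum (fun i => ?_) hdropped
    split_ifs with h
    · simp
    · exact mul_le_mul_of_nonneg_left (not_lt.mp h) (hw0 i)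
  rw [maskedRisk, hsplit]
  exact (add_le_add le_rfl hmask).trans_eq (by ring)

end maskedRisk

section risk

variable {α b t r : ℝ}

lemma bias_le_maskedRisk_le (hα : 1 < α) (hb : 1 < b) (ht : 0 < t) (hr : 1 ≤ r)
    (htr : t * r ^ α = 1) {n κ : ℝ} (hn : 0 < n) (hdof : dof α t = n) (hκ : 0 < κ)
    (hκr : κ * n ≤ r) {σsq W : ℝ} (hσ : 0 ≤ σsq)
    (hW : W = 1 / n * ∑' i : ℕ+, (1 - shrinkage α t i) ^ 2) :
    bias α b t ≤ maskedRisk b σsq W (fun i => shrinkage α t i) ∧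
      maskedRisk b σsq W (fun i => shrinkage α t i) ≤ (1 + 4 ^ α) ^ 2 / κ * (σsq + bias α b t) := by
  have hz : ∀ i : ℕ+, shrinkage α t i ^ 2 ≤ 1 := fun i => shrinkage_sq_le_one ht.le (by positivity)
  have hW0 : 0 ≤ W := hW ▸ mul_nonneg (by positivity) (tsum_nonneg fun i => sq_nonneg _)
  have hδ : κ / (1 + 4 ^ α) ^ 2 ≤ 1 - W := by
    rw [hW, one_sub_inv_mul_tsum_one_sub_shrinkage_sq hα ht hn.ne' hdof]
    calc κ / (1 + 4 ^ α) ^ 2 ≤ 1 / n * (r / (1 + 4 ^ α) ^ 2) := by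
          rw [← mul_div_assoc, one_div_mul_eq_div]
          gcongr
          rwa [le_div_iff₀ hn]
      _ ≤ _ := by gcongr; exact div_le_tsum_shrinkage_mul_one_sub hα ht hr htr
  have hδ0 : 0 < κ / (1 + 4 ^ α) ^ 2 := by positivity
  refine ⟨tsum_rpow_neg_mul_sq_le_maskedRisk hb hz hσ hW0 (by linarith),
    (maskedRisk_le hb hz (by linarith)).trans ?_⟩
  have hD : 1 ≤ (1 + 4 ^ α) ^ 2 / κ * (1 - W) := by
    rw [div_mul_eq_mul_div, le_div_iff₀ hκ, one_mul, mul_comm]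
    rwa [div_le_iff₀ (by positivity)] at hδ
  have hV : 0 ≤ bias α b t := bias_nonneg
  rw [div_le_iff₀ (by linarith)]
  change σsq * W + bias α b t ≤ _
  nlinarith

end risk

section sequences

variable {α b : ℝ} {ι : Type*} {l : Filter ι} {t r : ι → ℝ}

lemma eventually_scale_of_dof_eq {τ : ℕ → ℝ} (hα : 1 < α) (hτpos : ∀ n : ℕ, 1 ≤ n → 0 < τ n)
    (hτ : ∀ n : ℕ, 1 ≤ n → dof α (τ n) = n) :
    ∀ᶠ n : ℕ in atTop, 1 ≤ n ∧
      ((α - 1) / (2 * α) * n ≤ τ n ^ (-α⁻¹) ∧ τ n ^ (-α⁻¹) ≤ 3 * n) ∧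
      0 < τ n ∧ 1 ≤ τ n ^ (-α⁻¹) ∧ τ n * (τ n ^ (-α⁻¹)) ^ α = 1 := by
  have hκ : 0 < (α - 1) / (2 * α) := div_pos (by linarith) (by linarith)
  filter_upwards [eventually_ge_atTop 2,
    tendsto_natCast_atTop_atTop.eventually_ge_atTop ((α - 1) / (2 * α))⁻¹] with n hn hnκ
  have ht := hτpos n (by omega)
  have htr := mul_rpow_neg_inv_rpow (α := α) (by linarith) ht
  obtain ⟨hlo, hhi⟩ := scale_bounds_of_dof_eq hα ht (Real.rpow_pos_of_pos ht _) htr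
    (by exact_mod_cast hn) (hτ n (by omega))
  refine ⟨by omega, ⟨hlo, hhi⟩, ht, ?_, htr⟩
  rw [inv_le_iff_one_le_mul₀ hκ] at hnκ
  linarith

lemma isTheta_bias_of_lt (hα : 0 ≤ α) (hb : 1 < b) (hlt : b < 2 * α + 1)
    (h : ∀ᶠ x in l, 0 < t x ∧ 1 ≤ r x ∧ t x * r x ^ α = 1) :
    (fun x => bias α b (t x)) =Θ[l] fun x => r x ^ (1 - b) :=
  isTheta_of_mul_le_of_le_mul (c := 4 ^ (-b) / 4) (by positivity) <| h.mono fun x ⟨ht, hr, htr⟩ =>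
    ⟨by positivity, rpow_le_bias hα hb ht hr htr, bias_le_of_lt hb hlt ht hr htr⟩

lemma isTheta_bias_of_gt (hα : 0 ≤ α) (hb : 1 < b) (hgt : 2 * α + 1 < b)
    (h : ∀ᶠ x in l, 0 < t x ∧ 1 ≤ r x ∧ t x * r x ^ α = 1) :
    (fun x => bias α b (t x)) =Θ[l] fun x => r x ^ (-(2 * α)) := by
  refine isTheta_of_mul_le_of_le_mul (c := 1 / 4)
    (C := ∑' k : ℕ, ((k + 1 : ℕ) : ℝ) ^ (2 * α - b) + 1 / (b - 1)) (by positivity) <|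
    h.mono fun x ⟨ht, hr, htr⟩ => ?_
  have ht1 : t x ≤ 1 := by
    rw [eq_inv_of_mul_eq_one_left htr]; exact inv_le_one_of_one_le₀ (Real.one_le_rpow hr hα)
  refine ⟨by positivity, ?_, bias_le_of_gt hb hgt ht hr htr⟩
  rw [← sq_eq_rpow_neg (by linarith) htr, one_div_mul_eq_div]
  exact sq_div_four_le_bias hb ht ht1

end sequences

theorem masked_surrogate_scaling_law_general
    (α b K : ℝ) (hα : 1 < α) (hb : 1 < b) (hK : 0 < K)
    (τ : ℕ → ℝ) (hτpos : ∀ n : ℕ, 1 ≤ n → 0 < τ n)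
    (hτ : ∀ n : ℕ, 1 ≤ n → ∑' i : ℕ+, 1 / (1 + τ n * (i : ℝ) ^ α) = (n : ℝ))
    (ζ : ℕ → ℕ+ → ℝ)
    (hζ : ∀ (n : ℕ) (i : ℕ+), ζ n i = τ n * (i : ℝ) ^ α / (1 + τ n * (i : ℝ) ^ α))
    (Ω : ℕ → ℝ)
    (hΩ : ∀ n : ℕ, 1 ≤ n → Ω n = (1 / (n : ℝ)) * ∑' i : ℕ+, (1 - ζ n i) ^ 2)
    (σsq : ℕ → ℝ) (hσ : ∀ n, 0 ≤ σsq n)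
    (Rmask : ℕ → ℝ)
    (hRmask : ∀ n : ℕ, Rmask n =
      (σsq n * Ω n
          + ∑' i : ℕ+, (if ζ n i ^ 2 < 1 - Ω n then (i : ℝ) ^ (-b) * ζ n i ^ 2 else 0))
        / (1 - Ω n)
      + ∑' i : ℕ+, (if ζ n i ^ 2 < 1 - Ω n then 0 else (i : ℝ) ^ (-b))) :
    (b < 2 * α + 1 →
      (∀ n : ℕ, 1 ≤ n → σsq n ≤ K * (n : ℝ) ^ (-(b - 1))) →
      ∃ c C : ℝ, 0 < c ∧ 0 < C ∧ ∃ N : ℕ, ∀ n : ℕ, N ≤ n →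
        c * (n : ℝ) ^ (-(b - 1)) ≤ Rmask n ∧ Rmask n ≤ C * (n : ℝ) ^ (-(b - 1))) ∧
    (2 * α + 1 < b →
      (∀ n : ℕ, 1 ≤ n → σsq n ≤ K * (n : ℝ) ^ (-(2 * α))) →
      ∃ c C : ℝ, 0 < c ∧ 0 < C ∧ ∃ N : ℕ, ∀ n : ℕ, N ≤ n →
        c * (n : ℝ) ^ (-(2 * α)) ≤ Rmask n ∧ Rmask n ≤ C * (n : ℝ) ^ (-(2 * α))) := by
  obtain rfl : ζ = fun n (i : ℕ+) => shrinkage α (τ n) i := funext₂ hζ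
  obtain rfl : Rmask = fun n => maskedRisk b (σsq n) (Ω n) fun i => shrinkage α (τ n) i :=
    funext hRmask
  have hscale := eventually_scale_of_dof_eq hα hτpos hτ
  set r : ℕ → ℝ := fun n => τ n ^ (-α⁻¹)
  have hκ : 0 < (α - 1) / (2 * α) := div_pos (by linarith) (by linarith)
  have hR := hscale.mono fun n ⟨hn, ⟨hκr, _⟩, ht, hr, htr⟩ =>
    bias_le_maskedRisk_le hα hb ht hr htr (by positivity) (hτ n hn) hκ hκr (hσ n) (hΩ n hn)
  have hrn : r =Θ[atTop] fun n => (n : ℝ) :=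
    isTheta_of_mul_le_of_le_mul hκ <| hscale.mono fun n h => ⟨n.cast_nonneg, h.2.1⟩
  have hr0 : 0 ≤ᶠ[atTop] r := hscale.mono fun _ h => zero_le_one.trans h.2.2.2.1
  have hn0 : 0 ≤ᶠ[atTop] fun n : ℕ => (n : ℝ) := .of_forall fun n => n.cast_nonneg
  have hτr := hscale.mono fun _ h => h.2.2
  refine ⟨fun hlt hσK => ?_, fun hgt hσK => ?_⟩
  · rw [neg_sub] at hσK ⊢
    exact exists_bounds_of_le_of_le_mul ((isTheta_bias_of_lt (by linarith) hb hlt hτr).trans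
      (hrn.rpow hr0 hn0)) (fun _ => bias_nonneg) (fun _ => by positivity) (by positivity) hK hR hσK
  · exact exists_bounds_of_le_of_le_mul ((isTheta_bias_of_gt (by linarith) hb hgt hτr).trans
      (hrn.rpow hr0 hn0)) (fun _ => bias_nonneg) (fun _ => by positivity) (by positivity) hK hR hσK

/-- Scaling law of the optimally masked (weak-to-strong)
surrogate-to-target risk in the infinite-dimensional power-law setting: it scales as
`n^{-(b-1)}` when `b < 2α+1` and as `n^{-2α}` when `b > 2α+1`, i.e. the same scaling
law as the standard target model. -/
theorem masked_surrogate_scaling_law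
    (α b K : ℝ) (hα : 1 < α) (hb : 1 < b) (hbne : b ≠ 2 * α + 1) (hK : 0 < K)
    (τ : ℕ → ℝ) (hτpos : ∀ n : ℕ, 1 ≤ n → 0 < τ n)
    (hτ : ∀ n : ℕ, 1 ≤ n → ∑' i : ℕ+, 1 / (1 + τ n * (i : ℝ) ^ α) = (n : ℝ))
    (ζ : ℕ → ℕ+ → ℝ)
    (hζ : ∀ (n : ℕ) (i : ℕ+), ζ n i = τ n * (i : ℝ) ^ α / (1 + τ n * (i : ℝ) ^ α))
    (Ω : ℕ → ℝ)
    (hΩ : ∀ n : ℕ, 1 ≤ n → Ω n = (1 / (n : ℝ)) * ∑' i : ℕ+, (1 - ζ n i) ^ 2)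
    (σsq : ℕ → ℝ) (hσ : ∀ n, 0 ≤ σsq n)
    (Rmask : ℕ → ℝ)
    (hRmask : ∀ n : ℕ, Rmask n =
      (σsq n * Ω n
          + ∑' i : ℕ+, (if ζ n i ^ 2 < 1 - Ω n then (i : ℝ) ^ (-b) * ζ n i ^ 2 else 0))
        / (1 - Ω n)
      + ∑' i : ℕ+, (if ζ n i ^ 2 < 1 - Ω n then 0 else (i : ℝ) ^ (-b))) :
    (b < 2 * α + 1 →
      (∀ n : ℕ, 1 ≤ n → σsq n ≤ K * (n : ℝ) ^ (-(b - 1))) →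
      ∃ c C : ℝ, 0 < c ∧ 0 < C ∧ ∃ N : ℕ, ∀ n : ℕ, N ≤ n →
        c * (n : ℝ) ^ (-(b - 1)) ≤ Rmask n ∧ Rmask n ≤ C * (n : ℝ) ^ (-(b - 1))) ∧
    (2 * α + 1 < b →
      (∀ n : ℕ, 1 ≤ n → σsq n ≤ K * (n : ℝ) ^ (-(2 * α))) →
      ∃ c C : ℝ, 0 < c ∧ 0 < C ∧ ∃ N : ℕ, ∀ n : ℕ, N ≤ n →
        c * (n : ℝ) ^ (-(2 * α)) ≤ Rmask n ∧ Rmask n ≤ C * (n : ℝ) ^ (-(2 * α))) :=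
  masked_surrogate_scaling_law_general α b K hα hb hK τ hτpos hτ ζ hζ Ω hΩ σsq hσ Rmask hRmask
end
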